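/- The improper integrals A = lim_{T→∞} ∫₁^T (cos t)/t dt and B = lim_{T→∞} ∫₁^T (sin t)/t dt exist, and ∫₀^∞ (R/(1 + R⁴)) · exp(−R²) dR = (1/2) · ( sin(1)·(−A) + cos(1)·B ). In the notation of the cosine and sine integral functions, −A = Ci(1) and B = π/2 − Si(1), so the value equals (1/2)(sin(1)·Ci(1) + cos(1)·(π/2 − Si(1))). -/

import Mathlib

open MeasureTheory Real Filter Set Topology

/-!
Substituting `u = R²` turns the left side into `½ ∫₀^∞ e^{-u} / (1 + u²) du`. Writing
`1 / t = ∫₀^∞ e^{-tu} du` and integrating `sin (t - 1) e^{-tu}` explicitly in `t` (Fubini on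
`[1, T] × (0, ∞)`) gives `∫₁^T sin (t - 1) / t dt =`
`∫₀^∞ (e^{-u} - e^{-Tu} (cos (T - 1) + u sin (T - 1))) / (1 + u²) du`,
which tends to `∫₀^∞ e^{-u} / (1 + u²) du` by dominated convergence. Since
`sin (t - 1) = cos 1 sin t - sin 1 cos t`, that limit is also `cos 1 · B - sin 1 · A`, where
`A` and `B` exist by one integration by parts against `1 / t`.
-/

theorem integral_smul_comp_sq_Ioi {E : Type*} [NormedAddCommGroup E] [NormedSpace ℝ E]
    (g : ℝ → E) :
    ∫ x in Ioi (0 : ℝ), x • g (x ^ 2) = (2 : ℝ)⁻¹ • ∫ u in Ioi (0 : ℝ), g u := by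
  rw [← integral_comp_rpow_Ioi_of_pos (g := g) two_pos, ← integral_smul]
  refine setIntegral_congr_fun measurableSet_Ioi fun x _ => ?_
  rw [rpow_two, smul_smul]
  congr 1
  norm_num
  ring

theorem integral_exp_neg_mul_Ioi {t : ℝ} (ht : 0 < t) :
    ∫ u in Ioi (0 : ℝ), exp (-t * u) = t⁻¹ := by
  rw [integral_exp_mul_Ioi (neg_neg_iff_pos.2 ht)]
  simp only [mul_zero, exp_zero, neg_div_neg_eq, one_div]

theorem integral_sin_sub_mul_exp_neg_mul (a b u : ℝ) :
    ∫ t in a..b, sin (t - a) * exp (-t * u) =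
      (exp (-a * u) - exp (-b * u) * (cos (b - a) + u * sin (b - a))) / (1 + u ^ 2) := by
  have hderiv : ∀ t, HasDerivAt
      (fun t => -(exp (-t * u) * (cos (t - a) + u * sin (t - a))) / (1 + u ^ 2))
      (sin (t - a) * exp (-t * u)) t := by
    intro t
    have hexp := ((hasDerivAt_neg t).mul_const u).exp
    have hsub := (hasDerivAt_id' t).sub_const a
    have htrig := hsub.cos.add (hsub.sin.const_mul u)
    refine (((hexp.mul htrig).neg).div_const (1 + u ^ 2)).congr_deriv ?_
    simp only [Pi.add_apply]
    field_simp
    ring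
  rw [intervalIntegral.integral_eq_sub_of_hasDerivAt (fun t _ => hderiv t)
    (by apply Continuous.intervalIntegrable; fun_prop)]
  simp only [neg_mul, sub_self, cos_zero, sin_zero, mul_zero, add_zero, mul_one]
  ring

theorem integral_sin_sub_div_eq_integral_Ioi {a T : ℝ} (ha : 0 < a) (hT : a ≤ T) :
    ∫ t in a..T, sin (t - a) / t =
      ∫ u in Ioi (0 : ℝ),
        (exp (-a * u) - exp (-T * u) * (cos (T - a) + u * sin (T - a))) / (1 + u ^ 2) := by
  have hkernel : ∀ t ∈ Ioc a T,
      sin (t - a) / t = ∫ u in Ioi (0 : ℝ), sin (t - a) * exp (-t * u) := fun t ht => by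
    rw [integral_const_mul, integral_exp_neg_mul_Ioi (ha.trans ht.1), div_eq_mul_inv]
  have hint : Integrable (Function.uncurry fun t u => sin (t - a) * exp (-t * u))
      ((volume.restrict (Ioc a T)).prod (volume.restrict (Ioi 0))) := by
    refine Integrable.mono' ((exp_neg_integrableOn_Ioi 0 ha).comp_snd _)
      (by apply Continuous.aestronglyMeasurable; fun_prop) ?_
    rw [Measure.prod_restrict]
    filter_upwards [ae_restrict_mem (measurableSet_Ioc.prod measurableSet_Ioi)] with p ⟨ht, hu⟩
    simp only [Function.uncurry, norm_mul, Real.norm_eq_abs, abs_exp]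
    calc |sin (p.1 - a)| * exp (-p.1 * p.2) ≤ 1 * exp (-a * p.2) := by
          gcongr
          · exact abs_sin_le_one _
          · exact le_of_lt hu
          · exact ht.1.le
      _ = exp (-a * p.2) := one_mul _
  rw [intervalIntegral.integral_of_le hT, setIntegral_congr_fun measurableSet_Ioc hkernel,
    integral_integral_swap hint]
  refine setIntegral_congr_fun measurableSet_Ioi fun u _ => ?_
  rw [← intervalIntegral.integral_of_le hT, integral_sin_sub_mul_exp_neg_mul]

theorem abs_cos_add_mul_sin_le (x u : ℝ) : |cos x + u * sin x| ≤ 1 + |u| :=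
  calc |cos x + u * sin x| ≤ |cos x| + |u| * |sin x| :=
        (abs_add_le _ _).trans_eq (by rw [abs_mul])
    _ ≤ 1 + |u| * 1 := by gcongr; exacts [abs_cos_le_one x, abs_sin_le_one x]
    _ = 1 + |u| := by rw [mul_one]

theorem tendsto_intervalIntegral_sin_sub_div {a : ℝ} (ha : 0 < a) :
    Tendsto (fun T => ∫ t in a..T, sin (t - a) / t) atTop
      (𝓝 (∫ u in Ioi (0 : ℝ), exp (-a * u) / (1 + u ^ 2))) := by
  refine Tendsto.congr' (eventually_ge_atTop a |>.mono fun T hT =>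
    (integral_sin_sub_div_eq_integral_Ioi ha hT).symm) ?_
  refine tendsto_integral_filter_of_dominated_convergence (fun u => 3 * exp (-a * u))
    (Eventually.of_forall fun T => by
      apply Continuous.aestronglyMeasurable
      exact Continuous.div (by fun_prop) (by fun_prop) fun u => by positivity) ?_
    ((exp_neg_integrableOn_Ioi 0 ha).const_mul 3) ?_
  · filter_upwards [eventually_ge_atTop a] with T hT
    filter_upwards [ae_restrict_mem measurableSet_Ioi] with u hu
    have hu : 0 < u := hu
    have hdecay : exp (-T * u) ≤ exp (-a * u) := by gcongr
    have htrig := abs_of_pos hu ▸ abs_cos_add_mul_sin_le (T - a) u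
    have hquad : 0 ≤ 3 * u ^ 2 - u + 1 := by nlinarith [sq_nonneg (u - 1)]
    rw [Real.norm_eq_abs, abs_div, abs_of_pos (by positivity : (0 : ℝ) < 1 + u ^ 2),
      div_le_iff₀ (by positivity)]
    calc |exp (-a * u) - exp (-T * u) * (cos (T - a) + u * sin (T - a))|
        ≤ exp (-a * u) + exp (-a * u) * (1 + u) := by
          refine (abs_sub _ _).trans (add_le_add (abs_exp _).le ?_)
          rw [abs_mul, abs_exp]
          exact mul_le_mul hdecay htrig (abs_nonneg _) (exp_pos _).le
      _ ≤ 3 * exp (-a * u) * (1 + u ^ 2) := by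
          nlinarith [mul_nonneg (exp_pos (-a * u)).le hquad]
  · filter_upwards [ae_restrict_mem measurableSet_Ioi] with u hu
    have hdecay : Tendsto (fun T => exp (-T * u)) atTop (𝓝 0) :=
      tendsto_exp_atBot.comp (tendsto_neg_atTop_atBot.atBot_mul_const hu)
    have hbdd : IsBoundedUnder (· ≤ ·) atTop fun T => ‖cos (T - a) + u * sin (T - a)‖ :=
      isBoundedUnder_of ⟨1 + |u|, fun T => abs_cos_add_mul_sin_le (T - a) u⟩
    simpa only [neg_mul, sub_zero] using
      ((hdecay.zero_mul_isBoundedUnder_le hbdd).const_sub (exp (-a * u))).div_const (1 + u ^ 2)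

theorem tendsto_intervalIntegral_deriv_div {f f' : ℝ → ℝ} {a C : ℝ} (ha : 0 < a)
    (hf : ∀ t, HasDerivAt f (f' t) t) (hf' : Continuous f') (hC : ∀ t, |f t| ≤ C) :
    Tendsto (fun T => ∫ t in a..T, f' t / t) atTop
      (𝓝 (-(f a / a) + ∫ t in Ioi a, f t / t ^ 2)) := by
  have hcont : Continuous f := continuous_iff_continuousAt.2 fun t => (hf t).continuousAt
  have hpos : ∀ T, a ≤ T → ∀ t ∈ uIcc a T, 0 < t := fun T hT t ht =>
    ha.trans_le (uIcc_of_le hT ▸ ht).1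
  have hibp : ∀ T, a ≤ T →
      ∫ t in a..T, f' t / t = f T / T - f a / a + ∫ t in a..T, f t / t ^ 2 := by
    intro T hT
    have hinv : ContinuousOn (fun t : ℝ => -(t ^ 2)⁻¹) (uIcc a T) :=
      (continuousOn_pow 2).inv₀ (fun t ht => pow_ne_zero 2 (hpos T hT t ht).ne') |>.neg
    have := intervalIntegral.integral_mul_deriv_eq_deriv_mul
      (fun t ht => hasDerivAt_inv (hpos T hT t ht).ne') (fun t _ => hf t)
      hinv.intervalIntegrable (hf'.intervalIntegrable _ _)
    simp only [neg_mul, intervalIntegral.integral_neg, sub_neg_eq_add] at this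
    simpa only [div_eq_inv_mul, mul_comm (f _)] using this
  have htail : IntegrableOn (fun t => f t / t ^ 2) (Ioi a) := by
    refine Integrable.mono'
      ((integrableOn_Ioi_rpow_of_lt (by norm_num : (-2 : ℝ) < -1) ha).const_mul C)
      ((hcont.continuousOn.div (continuousOn_pow 2) fun t ht =>
        pow_ne_zero 2 (ha.trans ht).ne').aestronglyMeasurable measurableSet_Ioi) ?_
    filter_upwards [ae_restrict_mem measurableSet_Ioi] with t ht
    have ht0 : 0 < t := ha.trans ht
    simp only [norm_div, norm_pow, Real.norm_eq_abs]
    rw [abs_of_pos ht0, rpow_neg ht0.le, rpow_two, div_eq_mul_inv]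
    exact mul_le_mul_of_nonneg_right (hC t) (by positivity)
  have hboundary : Tendsto (fun T => f T / T) atTop (𝓝 0) := by
    refine squeeze_zero_norm' ?_ (by simpa using tendsto_inv_atTop_zero.const_mul C)
    filter_upwards [eventually_gt_atTop 0] with T hT
    rw [norm_div, Real.norm_eq_abs, Real.norm_eq_abs, abs_of_pos hT, div_eq_mul_inv]
    exact mul_le_mul_of_nonneg_right (hC T) (inv_nonneg.2 hT.le)
  refine Tendsto.congr' (eventually_ge_atTop a |>.mono fun T hT => (hibp T hT).symm) ?_
  simpa only [id_eq, zero_sub] using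
    (hboundary.sub_const (f a / a)).add (intervalIntegral_tendsto_integral_Ioi a htail tendsto_id)

theorem integral_sin_sub_div_eq {a T : ℝ} (ha : 0 < a) (hT : a ≤ T) :
    ∫ t in a..T, sin (t - a) / t =
      cos a * (∫ t in a..T, sin t / t) - sin a * ∫ t in a..T, cos t / t := by
  have hint : ∀ g : ℝ → ℝ, Continuous g →
      IntervalIntegrable (fun t => g t / t) volume a T := fun g hg =>
    (hg.continuousOn.div continuousOn_id fun t ht =>
      (ha.trans_le (uIcc_of_le hT ▸ ht).1).ne').intervalIntegrable
  rw [← intervalIntegral.integral_const_mul, ← intervalIntegral.integral_const_mul,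
    ← intervalIntegral.integral_sub ((hint _ continuous_sin).const_mul _)
      ((hint _ continuous_cos).const_mul _)]
  congr 1 with t
  rw [sin_sub]
  ring

theorem appendixE_integral :
    ∃ A B : ℝ,
      Tendsto (fun T : ℝ => ∫ t in (1:ℝ)..T, Real.cos t / t) atTop (nhds A) ∧
      Tendsto (fun T : ℝ => ∫ t in (1:ℝ)..T, Real.sin t / t) atTop (nhds B) ∧
      ∫ R in Set.Ioi (0 : ℝ), (R / (1 + R ^ 4)) * Real.exp (-R ^ 2) =
        (1 / 2) * (Real.sin 1 * (-A) + Real.cos 1 * B) := by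
  have hA := tendsto_intervalIntegral_deriv_div one_pos hasDerivAt_sin continuous_cos
    abs_sin_le_one
  have hB := tendsto_intervalIntegral_deriv_div (f := fun t => -cos t) one_pos
    (fun t => by simpa only [neg_neg] using (hasDerivAt_cos t).fun_neg) continuous_sin
    fun t => (abs_neg _).trans_le (abs_cos_le_one t)
  refine ⟨_, _, hA, hB, ?_⟩
  have hcomb := ((hB.const_mul (cos 1)).sub (hA.const_mul (sin 1))).congr'
    (eventually_ge_atTop 1 |>.mono fun T hT => (integral_sin_sub_div_eq one_pos hT).symm)
  have hlaplace := tendsto_nhds_unique (tendsto_intervalIntegral_sin_sub_div one_pos) hcomb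
  have hsubst := integral_smul_comp_sq_Ioi fun u => exp (-u) / (1 + u ^ 2)
  simp only [smul_eq_mul, neg_one_mul] at hsubst hlaplace
  calc ∫ R in Ioi (0 : ℝ), R / (1 + R ^ 4) * exp (-R ^ 2)
      = ∫ R in Ioi (0 : ℝ), R * (exp (-R ^ 2) / (1 + (R ^ 2) ^ 2)) := by
        congr 1 with R; ring
    _ = _ := by rw [hsubst, hlaplace]; ring
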